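/- In the DEIM greedy algorithm, if PᵀΞ_{j-1} ∈ ℝ^{(j-1)×(j-1)} is invertible and the new index γ_j satisfies (ξ_j − Ξ_{j-1}c)(γ_j) ≠ 0 where c = (PᵀΞ_{j-1})⁻¹Pᵀξ_j, then the augmented matrix P̂ᵀΞ_j ∈ ℝ^{j×j}, with P̂ = [P, e_{γ_j}] and Ξ_j = [Ξ_{j-1}, ξ_j], is also invertible. -/

import Mathlib

/-!
Since `Pᵀ` only selects the rows `γ`, the matrix `P̂ᵀ Ξ̂` is `Pᵀ Ξ` bordered by the column `ξ ∘ γ`,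
the row `Ξ γⱼ` and the corner `ξ γⱼ`. The Schur complement of `Pᵀ Ξ` in it is
`ξ γⱼ - Ξ γⱼ ⬝ᵥ (Pᵀ Ξ)⁻¹ Pᵀ ξ = (ξ - Ξ c) γⱼ`, so `det (P̂ᵀ Ξ̂) = det (Pᵀ Ξ) · (ξ - Ξ c) γⱼ`.
-/

open Matrix

namespace Matrix

section Selection

variable {m n o α : Type*} [Fintype n] [DecidableEq n] [NonAssocSemiring α]

theorem transpose_of_ite_eq_mul (γ : m → n) (X : Matrix n o α) :
    (of fun i j => if i = γ j then (1 : α) else 0)ᵀ * X = X.submatrix γ id := by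
  ext p q
  simp [mul_apply, ite_mul]

theorem transpose_of_ite_eq_mulVec (γ : m → n) (v : n → α) :
    (of fun i j => if i = γ j then (1 : α) else 0)ᵀ *ᵥ v = v ∘ γ := by
  ext p
  simp [mulVec, dotProduct, ite_mul]

end Selection

theorem det_succ_eq_det_mul_schur {R : Type*} [CommRing R] {k : ℕ}
    (M : Matrix (Fin (k + 1)) (Fin (k + 1)) R)
    (hA : IsUnit (M.submatrix Fin.castSucc Fin.castSucc).det) :
    M.det = (M.submatrix Fin.castSucc Fin.castSucc).det *
      (M (Fin.last k) (Fin.last k) - (fun q => M (Fin.last k) q.castSucc) ⬝ᵥ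
        ((M.submatrix Fin.castSucc Fin.castSucc)⁻¹ *ᵥ fun p => M p.castSucc (Fin.last k))) := by
  set A := M.submatrix Fin.castSucc Fin.castSucc
  have := A.invertibleOfIsUnitDet hA
  have hblocks : M.submatrix finSumFinEquiv finSumFinEquiv =
      fromBlocks A (of fun p (_ : Fin 1) => M p.castSucc (Fin.last k))
        (of fun _ q => M (Fin.last k) q.castSucc) (of fun _ _ => M (Fin.last k) (Fin.last k)) := by
    ext (i | i) (j | j)
    · rfl
    · fin_cases j; rfl
    · fin_cases i; rfl
    · fin_cases i; fin_cases j; rfl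
  rw [← det_submatrix_equiv_self finSumFinEquiv, hblocks, det_fromBlocks₁₁, det_fin_one,
    invOf_eq_nonsing_inv, Matrix.mul_assoc]
  rfl

end Matrix

/-- DEIM well-posedness induction step: if `Pᵀ Ξ` is invertible and the
residual of the new basis vector `ξ` at the new index `γj` is nonzero
(`(ξ − Ξ c)(γj) ≠ 0` with `c = (Pᵀ Ξ)⁻¹ Pᵀ ξ`), then the augmented matrix
`P̂ᵀ Ξ̂` with `P̂ = [P, e_{γj}]` and `Ξ̂ = [Ξ, ξ]` is also invertible. -/
theorem deim_inductive_invertibility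
    (n k : ℕ) (Ξ : Matrix (Fin n) (Fin k) ℝ) (ξ : Fin n → ℝ)
    (γ : Fin k → Fin n)
    (P : Matrix (Fin n) (Fin k) ℝ)
    (hP : P = Matrix.of fun i j => if i = γ j then (1 : ℝ) else 0)
    (hinv : IsUnit (Pᵀ * Ξ).det)
    (c : Fin k → ℝ) (hc : c = (Pᵀ * Ξ)⁻¹ *ᵥ (Pᵀ *ᵥ ξ))
    (γj : Fin n) (hres : (ξ - Ξ *ᵥ c) γj ≠ 0)
    (Phat : Matrix (Fin n) (Fin (k + 1)) ℝ)
    (hPhat : Phat = Matrix.of fun i j =>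
      if i = Fin.snoc γ γj j then (1 : ℝ) else 0)
    (Ξhat : Matrix (Fin n) (Fin (k + 1)) ℝ)
    (hΞhat : Ξhat = Matrix.of fun i j => Fin.snoc (Ξ i) (ξ i) j) :
    IsUnit (Phatᵀ * Ξhat).det := by
  subst hP hPhat hΞhat hc
  rw [transpose_of_ite_eq_mul] at hinv hres ⊢
  rw [transpose_of_ite_eq_mulVec] at hres
  have hA : ((of fun i j => Fin.snoc (Ξ i) (ξ i) j).submatrix (Fin.snoc γ γj) id).submatrix
      Fin.castSucc Fin.castSucc = Ξ.submatrix γ id := by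
    ext p q
    simp
  rw [det_succ_eq_det_mul_schur _ (hA ▸ hinv), hA]
  refine hinv.mul (isUnit_iff_ne_zero.mpr ?_)
  convert hres using 1
  simp only [submatrix_apply, of_apply, Fin.snoc_last, Fin.snoc_castSucc, id, Pi.sub_apply]
  rfl
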